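/- arXiv:1809.05471 — 6 statements merged into one kernel-verified Lean document; each statement's English description precedes it below -/
import Mathlib

section
/- Let X ⊂ ℝ be a finite set and let Φ = (φ_1,…,φ_N) and Ψ = (ψ_1,…,ψ_M) be finite families of functions ℝ → ℝ such that csupp φ_n ∩ X ≠ ∅ for each n and csupp ψ_m ∩ X ≠ ∅ for each m. Then NNZ(Φ,Ψ,X) = {(n,m) : x_{φ_n} ∈ csupp ψ_m} ∪ {(n,m) : x_{ψ_m} ∈ csupp φ_n}. (Lemma 'lemma:1D-NNZ' of the paper.) -/
open Set

/-- The convex hull of the support of a univariate function. -/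
noncomputable def csupp (f : ℝ → ℝ) : Set ℝ :=
  convexHull ℝ (Function.support f)

/-- The potential sparsity pattern: pairs `(n, m)` such that some quadrature point of `X`
lies in both `csupp (Φ n)` and `csupp (Ψ m)`. -/
def NNZ {N M : ℕ} (Φ : Fin N → ℝ → ℝ) (Ψ : Fin M → ℝ → ℝ) (X : Finset ℝ) :
    Set (Fin N × Fin M) :=
  {nm | ((X : Set ℝ) ∩ csupp (Φ nm.1) ∩ csupp (Ψ nm.2)).Nonempty}

/-- Lemma `lemma:1D-NNZ`: with `xφ n = min (csupp (Φ n) ∩ X)` and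
`xψ m = min (csupp (Ψ m) ∩ X)` (expressed via `IsLeast`, which in particular forces
these intersections to be nonempty), the sparsity pattern is exactly
`{(n,m) : xφ n ∈ csupp (Ψ m)} ∪ {(n,m) : xψ m ∈ csupp (Φ n)}`. -/
theorem nnz_1D {N M : ℕ} (X : Finset ℝ)
    (Φ : Fin N → ℝ → ℝ) (Ψ : Fin M → ℝ → ℝ)
    (xφ : Fin N → ℝ) (xψ : Fin M → ℝ)
    (hφ : ∀ n, IsLeast (csupp (Φ n) ∩ (X : Set ℝ)) (xφ n))
    (hψ : ∀ m, IsLeast (csupp (Ψ m) ∩ (X : Set ℝ)) (xψ m)) :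
    NNZ Φ Ψ X =
      {nm : Fin N × Fin M | xφ nm.1 ∈ csupp (Ψ nm.2)} ∪
        {nm : Fin N × Fin M | xψ nm.2 ∈ csupp (Φ nm.1)} := by
  ext ⟨n, m⟩
  constructor
  · rintro ⟨x, ⟨⟨hxX, hxφ⟩, hxψ⟩⟩
    have hφn := hφ n
    have hψm := hψ m
    have hxφle : xφ n ≤ x := hφn.2 ⟨hxφ, hxX⟩
    have hxψle : xψ m ≤ x := hψm.2 ⟨hxψ, hxX⟩
    rcases le_total (xφ n) (xψ m) with h | h
    · right
      have hconv : Convex ℝ (csupp (Φ n)) := convex_convexHull ℝ _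
      exact hconv.ordConnected.out hφn.1.1 hxφ ⟨h, hxψle⟩
    · left
      have hconv : Convex ℝ (csupp (Ψ m)) := convex_convexHull ℝ _
      exact hconv.ordConnected.out hψm.1.1 hxψ ⟨h, hxφle⟩
  · rintro (h | h)
    · exact ⟨xφ n, ⟨(hφ n).1.2, (hφ n).1.1⟩, h⟩
    · exact ⟨xψ m, ⟨(hψ m).1.2, h⟩, (hψ m).1.1⟩
end

section
/- Let X ⊂ ℝ be a finite set and let Φ = (φ_1,…,φ_N) and Ψ = (ψ_1,…,ψ_M) be finite families of functions ℝ → ℝ such that csupp φ_n ∩ X ≠ ∅ for each n and csupp ψ_m ∩ X ≠ ∅ for each m. Then #NNZ(Φ,Ψ,X) ≤ p·M + q·N, where p and q are the overlap parameters of Φ and Ψ. (Corollary 'lem:nnz-1D' of the paper.) -/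
open Set

lemma aux_col {α β : Type*} [Fintype α] [Fintype β] (S : Set (α × β)) (p : ℕ)
    (h : ∀ b : β, {a : α | (a, b) ∈ S}.ncard ≤ p) :
    S.ncard ≤ p * Fintype.card β := by
  classical
  rw [Set.ncard_eq_toFinset_card' S,
    Finset.card_eq_sum_card_fiberwise (f := Prod.snd) (t := Finset.univ)
      (fun x _ => Finset.mem_univ _)]
  have hb : ∀ b : β, (S.toFinset.filter fun x => x.2 = b).card ≤ p := by
    intro b
    have hmaps : ∀ x ∈ S.toFinset.filter (fun x => x.2 = b), Prod.fst x ∈ {a : α | (a, b) ∈ S}.toFinset := by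
      rintro ⟨a, b'⟩ hx
      simp only [Finset.mem_filter, Set.mem_toFinset] at hx ⊢
      obtain ⟨h1, rfl⟩ := hx
      exact h1
    have hinj : Set.InjOn Prod.fst ((S.toFinset.filter fun x => x.2 = b : Finset (α × β)) : Set (α × β)) := by
      rintro ⟨a1, b1⟩ h1 ⟨a2, b2⟩ h2 hfst
      simp only [Finset.coe_filter, Set.mem_setOf_eq] at h1 h2
      cases hfst; cases h1.2; cases h2.2; rfl
    calc (S.toFinset.filter fun x => x.2 = b).card
        ≤ {a : α | (a, b) ∈ S}.toFinset.card :=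
          Finset.card_le_card_of_injOn Prod.fst hmaps hinj
      _ = {a : α | (a, b) ∈ S}.ncard := (Set.ncard_eq_toFinset_card' _).symm
      _ ≤ p := h b
  calc ∑ b : β, (S.toFinset.filter fun x => x.2 = b).card ≤ ∑ _b : β, p :=
        Finset.sum_le_sum fun b _ => hb b
    _ = p * Fintype.card β := by simp [mul_comm]

lemma aux_row {α β : Type*} [Fintype α] [Fintype β] (S : Set (α × β)) (p : ℕ)
    (h : ∀ a : α, {b : β | (a, b) ∈ S}.ncard ≤ p) :
    S.ncard ≤ p * Fintype.card α := by
  have himg : S.ncard = (Prod.swap '' S).ncard :=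
    (Set.ncard_image_of_injective S Prod.swap_injective).symm
  rw [himg]
  apply aux_col
  intro a
  have : {b : β | (b, a) ∈ Prod.swap '' S} = {b : β | (a, b) ∈ S} := by
    ext b
    simp [Prod.swap_eq_iff_eq_swap]
  rw [this]
  exact h a

/-- Corollary `lem:nnz-1D`: `#NNZ(Φ,Ψ,X) ≤ p·M + q·N`, where
`p = max_{x ∈ X} #{n : x ∈ csupp (Φ n)}` and `q = max_{x ∈ X} #{m : x ∈ csupp (Ψ m)}`
are the overlap parameters. -/
theorem card_nnz_1D_le {N M : ℕ} (X : Finset ℝ)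
    (Φ : Fin N → ℝ → ℝ) (Ψ : Fin M → ℝ → ℝ)
    (hΦ : ∀ n, (csupp (Φ n) ∩ (X : Set ℝ)).Nonempty)
    (hΨ : ∀ m, (csupp (Ψ m) ∩ (X : Set ℝ)).Nonempty) :
    (NNZ Φ Ψ X).ncard ≤
      (X.sup fun x => {n : Fin N | x ∈ csupp (Φ n)}.ncard) * M +
        (X.sup fun x => {m : Fin M | x ∈ csupp (Ψ m)}.ncard) * N := by
  classical
  set p := X.sup fun x => {n : Fin N | x ∈ csupp (Φ n)}.ncard with hp
  set q := X.sup fun x => {m : Fin M | x ∈ csupp (Ψ m)}.ncard with hq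
  -- minimal quadrature point in each support
  have hAex : ∀ n : Fin N, ∃ a : ℝ, a ∈ X ∧ a ∈ csupp (Φ n) ∧
      ∀ x ∈ X, x ∈ csupp (Φ n) → a ≤ x := by
    intro n
    obtain ⟨x0, hx0I, hx0X⟩ := hΦ n
    have hne : (X.filter (fun x => x ∈ csupp (Φ n))).Nonempty :=
      ⟨x0, Finset.mem_filter.2 ⟨hx0X, hx0I⟩⟩
    refine ⟨(X.filter (fun x => x ∈ csupp (Φ n))).min' hne, ?_, ?_, ?_⟩
    · exact (Finset.mem_filter.1 (Finset.min'_mem _ hne)).1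
    · exact (Finset.mem_filter.1 (Finset.min'_mem _ hne)).2
    · intro x hxX hxI
      exact Finset.min'_le _ _ (Finset.mem_filter.2 ⟨hxX, hxI⟩)
  have hBex : ∀ m : Fin M, ∃ b : ℝ, b ∈ X ∧ b ∈ csupp (Ψ m) ∧
      ∀ x ∈ X, x ∈ csupp (Ψ m) → b ≤ x := by
    intro m
    obtain ⟨x0, hx0I, hx0X⟩ := hΨ m
    have hne : (X.filter (fun x => x ∈ csupp (Ψ m))).Nonempty :=
      ⟨x0, Finset.mem_filter.2 ⟨hx0X, hx0I⟩⟩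
    refine ⟨(X.filter (fun x => x ∈ csupp (Ψ m))).min' hne, ?_, ?_, ?_⟩
    · exact (Finset.mem_filter.1 (Finset.min'_mem _ hne)).1
    · exact (Finset.mem_filter.1 (Finset.min'_mem _ hne)).2
    · intro x hxX hxI
      exact Finset.min'_le _ _ (Finset.mem_filter.2 ⟨hxX, hxI⟩)
  choose A hAX hAI hAmin using hAex
  choose B hBX hBJ hBmin using hBex
  have hconvI : ∀ n, (csupp (Φ n)).OrdConnected :=
    fun n => (convex_convexHull ℝ _).ordConnected
  have hconvJ : ∀ m, (csupp (Ψ m)).OrdConnected :=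
    fun m => (convex_convexHull ℝ _).ordConnected
  have key : NNZ Φ Ψ X ⊆
      {nm : Fin N × Fin M | B nm.2 ∈ csupp (Φ nm.1)} ∪
      {nm : Fin N × Fin M | A nm.1 ∈ csupp (Ψ nm.2)} := by
    rintro ⟨n, m⟩ ⟨x, ⟨⟨hxX, hxI⟩, hxJ⟩⟩
    have hAx : A n ≤ x := hAmin n x hxX hxI
    have hBx : B m ≤ x := hBmin m x hxX hxJ
    rcases le_total (A n) (B m) with hle | hle
    · left
      exact (hconvI n).out (hAI n) hxI ⟨hle, hBx⟩
    · right
      exact (hconvJ m).out (hBJ m) hxJ ⟨hle, hAx⟩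
  calc (NNZ Φ Ψ X).ncard
      ≤ ({nm : Fin N × Fin M | B nm.2 ∈ csupp (Φ nm.1)} ∪
         {nm : Fin N × Fin M | A nm.1 ∈ csupp (Ψ nm.2)}).ncard :=
        Set.ncard_le_ncard key (Set.toFinite _)
    _ ≤ {nm : Fin N × Fin M | B nm.2 ∈ csupp (Φ nm.1)}.ncard +
        {nm : Fin N × Fin M | A nm.1 ∈ csupp (Ψ nm.2)}.ncard :=
        Set.ncard_union_le _ _
    _ ≤ p * M + q * N := by
        gcongr
        · have := aux_col (α := Fin N) (β := Fin M)
            {nm : Fin N × Fin M | B nm.2 ∈ csupp (Φ nm.1)} p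
            (fun m => Finset.le_sup (f := fun x => {n : Fin N | x ∈ csupp (Φ n)}.ncard) (hBX m))
          simpa using this
        · have := aux_row (α := Fin N) (β := Fin M)
            {nm : Fin N × Fin M | A nm.1 ∈ csupp (Ψ nm.2)} q
            (fun n => Finset.le_sup (f := fun x => {m : Fin M | x ∈ csupp (Ψ m)}.ncard) (hAX n))
          simpa using this
end

section
/- Let X ⊂ ℝ be a finite set and let Φ = (φ_1,…,φ_N) and Ψ = (ψ_1,…,ψ_M) be finite families of functions ℝ → ℝ such that csupp φ_n ∩ X ≠ ∅ for each n and csupp ψ_m ∩ X ≠ ∅ for each m. Assume that the overlap bounds are attained at every leftmost point: for every n, #{m : x_{φ_n} ∈ csupp ψ_m} = q, and for every m, #{n : x_{ψ_m} ∈ csupp φ_n} = p. Then #NNZ(Φ,Ψ,X) = q·N + p·M − #{(n,m) : x_{φ_n} = x_{ψ_m}}. (Abstract form of Corollary 'lem:nnz-B-spline'; for B-splines over open knot vectors with a quadrature point between any two consecutive knots, the last term equals the sum over interior knots of the products of knot multiplicities.) -/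
open Set

lemma ncard_prod_set {N M : ℕ} (P : Fin N → Fin M → Prop) :
    {nm : Fin N × Fin M | P nm.1 nm.2}.ncard = ∑ n, {m | P n m}.ncard := by
  classical
  rw [← Nat.card_coe_set_eq]
  have e : ↥{nm : Fin N × Fin M | P nm.1 nm.2} ≃ Σ n, {m // P n m} :=
    (Equiv.setCongr rfl).trans (Equiv.subtypeProdEquivSigmaSubtype P)
  rw [Nat.card_congr e, Nat.card_eq_fintype_card, Fintype.card_sigma]
  simp [← Nat.card_coe_set_eq, Nat.card_eq_fintype_card, Fintype.card_subtype]

lemma ncard_prod_set' {N M : ℕ} (P : Fin N → Fin M → Prop) :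
    {nm : Fin N × Fin M | P nm.1 nm.2}.ncard = ∑ m, {n | P n m}.ncard := by
  have e : {nm : Fin N × Fin M | P nm.1 nm.2}.ncard
      = {nm : Fin M × Fin N | P nm.2 nm.1}.ncard := by
    rw [← Nat.card_coe_set_eq, ← Nat.card_coe_set_eq]
    exact Nat.card_congr ((Equiv.prodComm _ _).subtypeEquiv (by simp))
  rw [e]
  exact ncard_prod_set (fun m n => P n m)

/-- Abstract form of Corollary `lem:nnz-B-spline`: with
`xφ n = min (csupp (Φ n) ∩ X)` and `xψ m = min (csupp (Ψ m) ∩ X)`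
(expressed via `IsLeast`), and assuming that the overlap bounds are attained at every
leftmost point, i.e. `#{m : xφ n ∈ csupp (Ψ m)} = q` for every `n` and
`#{n : xψ m ∈ csupp (Φ n)} = p` for every `m`, the size of the sparsity pattern is
`q·N + p·M − #{(n,m) : xφ n = xψ m}`. -/
theorem card_nnz_1D_eq {N M : ℕ} (X : Finset ℝ)
    (Φ : Fin N → ℝ → ℝ) (Ψ : Fin M → ℝ → ℝ)
    (xφ : Fin N → ℝ) (xψ : Fin M → ℝ)
    (hφ : ∀ n, IsLeast (csupp (Φ n) ∩ (X : Set ℝ)) (xφ n))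
    (hψ : ∀ m, IsLeast (csupp (Ψ m) ∩ (X : Set ℝ)) (xψ m))
    (p q : ℕ)
    (hq : ∀ n, {m : Fin M | xφ n ∈ csupp (Ψ m)}.ncard = q)
    (hp : ∀ m, {n : Fin N | xψ m ∈ csupp (Φ n)}.ncard = p) :
    (NNZ Φ Ψ X).ncard =
      q * N + p * M - {nm : Fin N × Fin M | xφ nm.1 = xψ nm.2}.ncard := by
  classical
  set A : Set (Fin N × Fin M) := {nm | xφ nm.1 ∈ csupp (Ψ nm.2)} with hA
  set B : Set (Fin N × Fin M) := {nm | xψ nm.2 ∈ csupp (Φ nm.1)} with hB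
  have hconvφ : ∀ n, Convex ℝ (csupp (Φ n)) := fun n => convex_convexHull ℝ _
  have hconvψ : ∀ m, Convex ℝ (csupp (Ψ m)) := fun m => convex_convexHull ℝ _
  -- NNZ = A ∪ B
  have hNNZ : NNZ Φ Ψ X = A ∪ B := by
    ext ⟨n, m⟩
    constructor
    · rintro ⟨x, ⟨⟨hxX, hxφ⟩, hxψ⟩⟩
      have hφx : xφ n ≤ x := (hφ n).2 ⟨hxφ, hxX⟩
      have hψx : xψ m ≤ x := (hψ m).2 ⟨hxψ, hxX⟩
      rcases le_total (xφ n) (xψ m) with h | h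
      · right
        exact (hconvφ n).ordConnected.out (hφ n).1.1 hxφ ⟨h, hψx⟩
      · left
        exact (hconvψ m).ordConnected.out (hψ m).1.1 hxψ ⟨h, hφx⟩
    · rintro (h | h)
      · exact ⟨xφ n, ⟨⟨(hφ n).1.2, (hφ n).1.1⟩, h⟩⟩
      · exact ⟨xψ m, ⟨⟨(hψ m).1.2, h⟩, (hψ m).1.1⟩⟩
  -- A ∩ B = diagonal set
  have hABi : A ∩ B = {nm : Fin N × Fin M | xφ nm.1 = xψ nm.2} := by
    ext ⟨n, m⟩
    constructor
    · rintro ⟨h1, h2⟩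
      have le1 : xψ m ≤ xφ n := (hψ m).2 ⟨h1, (hφ n).1.2⟩
      have le2 : xφ n ≤ xψ m := (hφ n).2 ⟨h2, (hψ m).1.2⟩
      exact le_antisymm le2 le1
    · intro h
      have h' : xφ n = xψ m := h
      refine ⟨?_, ?_⟩
      · show xφ n ∈ csupp (Ψ m); rw [h']; exact (hψ m).1.1
      · show xψ m ∈ csupp (Φ n); rw [← h']; exact (hφ n).1.1
  have hAcard : A.ncard = q * N := by
    have := ncard_prod_set (fun n m => xφ n ∈ csupp (Ψ m))
    rw [hA, this]
    simp [hq, Finset.sum_const, mul_comm]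
  have hBcard : B.ncard = p * M := by
    have := ncard_prod_set' (fun n m => xψ m ∈ csupp (Φ n))
    rw [hB, this]
    simp [hp, Finset.sum_const, mul_comm]
  have key := Set.ncard_union_add_ncard_inter A B (Set.toFinite A) (Set.toFinite B)
  rw [hNNZ, ← hABi]
  omega
end

section
/- Let s_1,…,s_d and p_1,…,p_d be positive integers, and let P be a family of pairwise disjoint boxes in ℝ^d of the form D = [a_1,b_1) × … × [a_d,b_d) with integer endpoints a_δ, b_δ ∈ ℤ and b_δ − a_δ ≥ s_δ for every δ. Then for any integers c_1,…,c_d, the number of boxes D ∈ P that intersect the box S = [c_1, c_1+p_1) × … × [c_d, c_d+p_d) is at most ∏_{δ=1}^d ⌈(s_δ + p_δ − 1)/s_δ⌉. (Combinatorial core of Lemma 'remark:macro-size': for tensor-product B-splines of orders p_δ on macro-elements of at least s_δ elements per direction, the repetition ratio R satisfies R ≤ ∏_δ ⌈(s_δ+p_δ−1)/s_δ⌉.) -/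
open Set

/-- The half-open axis-aligned box `[a₁,b₁) × … × [a_d,b_d)` in `ℝ^d` with integer
endpoints. -/
def boxSet {d : ℕ} (a b : Fin d → ℤ) : Set (Fin d → ℝ) :=
  Set.pi Set.univ fun δ => Set.Ico (a δ : ℝ) (b δ : ℝ)

/-- Per-coordinate key lemma: an integer interval `[a,b)` of length `≥ s` meeting
`[c, c+p)` contains a grid point `c + k*s` with `k < (s+p-1) ⌈/⌉ s`. -/
lemma key_coord (s p : ℕ) (hs : 0 < s) (hp : 0 < p) (a b c : ℤ)
    (hab : (s : ℤ) ≤ b - a) (h1 : a < c + p) (h2 : c < b) :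
    ∃ k : ℕ, k < (s + p - 1) ⌈/⌉ s ∧ a ≤ c + (k : ℤ) * s ∧ c + (k : ℤ) * s < b := by
  set u : ℤ := max (a - c) 0 with hu
  have hu0 : 0 ≤ u := le_max_right _ _
  have hup : u ≤ (p : ℤ) - 1 := by
    have : (1 : ℤ) ≤ p := by exact_mod_cast hp
    omega
  set q : ℤ := (u + s - 1) / s with hqdef
  have hspos : (0 : ℤ) < s := by exact_mod_cast hs
  have hq0 : 0 ≤ q := Int.ediv_nonneg (by omega) (by omega)
  obtain ⟨r, hr0, hrs, hreq⟩ : ∃ r : ℤ, 0 ≤ r ∧ r < s ∧ (s : ℤ) * q + r = u + s - 1 := by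
    refine ⟨(u + s - 1) % s, Int.emod_nonneg _ (by omega), Int.emod_lt_of_pos _ hspos, ?_⟩
    rw [hqdef]; exact Int.mul_ediv_add_emod _ _
  have hqs1 : u ≤ q * s := by nlinarith
  have hqs2 : q * s ≤ u + s - 1 := by nlinarith
  refine ⟨q.toNat, ?_, ?_, ?_⟩
  · -- k < m
    set m : ℕ := (s + p - 1) ⌈/⌉ s with hm
    have hms : s + p - 1 ≤ s * m := le_smul_ceilDiv hs
    have hmsZ : (s : ℤ) + p - 1 ≤ (s : ℤ) * m := by
      have : ((s + p - 1 : ℕ) : ℤ) ≤ ((s * m : ℕ) : ℤ) := by exact_mod_cast hms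
      push_cast at this
      omega
    have hks : (q.toNat : ℤ) * s < (m : ℤ) * s := by
      rw [Int.toNat_of_nonneg hq0]
      nlinarith
    have : (q.toNat : ℤ) < (m : ℤ) := by
      by_contra h
      push_neg at h
      nlinarith
    exact_mod_cast this
  · rw [Int.toNat_of_nonneg hq0]
    have : a - c ≤ u := le_max_left _ _
    omega
  · rw [Int.toNat_of_nonneg hq0]
    rcases le_or_gt (a - c) 0 with h | h
    · have hu' : u = 0 := by omega
      have hqs : q * s ≤ (s : ℤ) - 1 := by omega
      have hq' : q = 0 := by
        by_contra hne
        have h1q : (1 : ℤ) ≤ q := by omega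
        have : (s : ℤ) ≤ q * s := by nlinarith
        omega
      have : q * (s : ℤ) = 0 := by rw [hq']; ring
      omega
    · have : u = a - c := by omega
      omega

/-- Combinatorial core of Lemma `remark:macro-size`: if `P` is a family of pairwise
disjoint boxes with integer endpoints and side lengths at least `s_δ` in each direction,
then the number of boxes of `P` intersecting a box with side lengths `p_δ` is at most
`∏_δ ⌈(s_δ + p_δ − 1)/s_δ⌉`. -/
theorem card_boxes_meeting_le {d : ℕ} (s p : Fin d → ℕ)
    (hs : ∀ δ, 0 < s δ) (hp : ∀ δ, 0 < p δ)
    (P : Finset ((Fin d → ℤ) × (Fin d → ℤ)))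
    (hsize : ∀ D ∈ P, ∀ δ, (s δ : ℤ) ≤ D.2 δ - D.1 δ)
    (hdisj : (P : Set ((Fin d → ℤ) × (Fin d → ℤ))).Pairwise fun D E =>
      Disjoint (boxSet D.1 D.2) (boxSet E.1 E.2))
    (c : Fin d → ℤ) :
    {D | D ∈ P ∧
        (boxSet D.1 D.2 ∩ boxSet c (fun δ => c δ + (p δ : ℤ))).Nonempty}.ncard ≤
      ∏ δ, (s δ + p δ - 1) ⌈/⌉ s δ := by
  classical
  set m : Fin d → ℕ := fun δ => (s δ + p δ - 1) ⌈/⌉ s δ with hm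
  set A : Set ((Fin d → ℤ) × (Fin d → ℤ)) :=
    {D | D ∈ P ∧ (boxSet D.1 D.2 ∩ boxSet c (fun δ => c δ + (p δ : ℤ))).Nonempty} with hA
  -- for each D in A, choose a grid point index
  have key : ∀ D ∈ A, ∃ k : Fin d → ℕ, (∀ δ, k δ < m δ) ∧
      ∀ δ, D.1 δ ≤ c δ + (k δ : ℤ) * s δ ∧ c δ + (k δ : ℤ) * s δ < D.2 δ := by
    rintro D ⟨hDP, x, hx1, hx2⟩
    have h : ∀ δ, ∃ k : ℕ, k < m δ ∧ D.1 δ ≤ c δ + (k : ℤ) * s δ ∧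
        c δ + (k : ℤ) * s δ < D.2 δ := by
      intro δ
      have hx1δ := hx1 δ (mem_univ δ)
      have hx2δ := hx2 δ (mem_univ δ)
      simp only [Set.mem_Ico] at hx1δ hx2δ
      apply key_coord (s δ) (p δ) (hs δ) (hp δ) _ _ _ (hsize D hDP δ)
      · have : (D.1 δ : ℝ) < (c δ : ℝ) + (p δ : ℝ) := lt_of_le_of_lt hx1δ.1 (by
          push_cast at hx2δ ⊢; linarith)
        exact_mod_cast (by push_cast; linarith : (D.1 δ : ℝ) < ((c δ + p δ : ℤ) : ℝ))
      · have : (c δ : ℝ) < (D.2 δ : ℝ) := lt_of_le_of_lt hx2δ.1 hx1δ.2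
        exact_mod_cast this
    choose k hk1 hk2 hk3 using h
    exact ⟨k, hk1, fun δ => ⟨hk2 δ, hk3 δ⟩⟩
  choose! k hk1 hk2 using key
  -- the grid point associated to D
  set pt : (Fin d → ℕ) → (Fin d → ℝ) := fun g δ => ((c δ + (g δ : ℤ) * s δ : ℤ) : ℝ) with hpt
  have hmem : ∀ D ∈ A, pt (k D) ∈ boxSet D.1 D.2 := by
    intro D hD δ _
    have := hk2 D hD δ
    simp only [hpt]
    constructor
    · exact_mod_cast this.1
    · exact_mod_cast this.2
  have hAfin : A.Finite := Set.Finite.subset P.finite_toSet fun D hD => hD.1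
  have hinj : Set.InjOn k A := by
    intro D hD E hE hke
    by_contra hne
    have hdisjDE := hdisj hD.1 hE.1 hne
    have h1 : pt (k D) ∈ boxSet D.1 D.2 := hmem D hD
    have h2 : pt (k D) ∈ boxSet E.1 E.2 := hke ▸ hmem E hE
    exact Set.disjoint_left.mp hdisjDE h1 h2
  calc A.ncard = (k '' A).ncard := (Set.ncard_image_of_injOn hinj).symm
    _ ≤ ((Fintype.piFinset fun δ => Finset.range (m δ)) :
          Set ((Fin d → ℕ))).ncard := by
        apply Set.ncard_le_ncard
        · rintro g ⟨D, hD, rfl⟩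
          simp only [Finset.mem_coe, Fintype.mem_piFinset, Finset.mem_range]
          exact hk1 D hD
        · exact (Fintype.piFinset fun δ => Finset.range (m δ)).finite_toSet
    _ = ∏ δ, m δ := by
        rw [Set.ncard_coe_finset, Fintype.card_piFinset]
        simp
end

section
/- Let d ≥ 1 and let p_1,…,p_d be positive integers. Let P be a family of pairwise disjoint boxes D = [a_1,b_1) × … × [a_d,b_d) with integer endpoints whose union covers [0,p_1) × … × [0,p_d), such that every D ∈ P intersects [0,p_1) × … × [0,p_d) and, for some index j_D ∈ {1,…,d} depending on D, satisfies b_δ − a_δ = p_δ for all δ ≠ j_D and b_{j_D} − a_{j_D} = 1. Then #P ≤ 2^d + 2^{d−1}·Σ_{δ=1}^d (p_δ − 2)_+, where x_+ = max{x,0}. (Proposition 'lemma:narrow-macro-elements' of the paper.) -/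
open Set

lemma filter_apply_card (n : ℕ) (j : Fin n) :
    (Finset.univ.filter fun v : Fin n → Bool => v j = true).card = 2 ^ (n - 1) := by
  classical
  have h : (Finset.univ.filter fun v : Fin n → Bool => v j = true).card
      = (Finset.univ : Finset ({i : Fin n // i ≠ j} → Bool)).card := by
    refine Finset.card_nbij' (fun v => fun i => v i.1)
      (fun w => fun δ => if h : δ = j then true else w ⟨δ, h⟩) ?_ ?_ ?_ ?_
    · intro v _; exact Finset.mem_univ _
    · intro w _
      simp
    · intro v hv
      funext δ
      by_cases hδ : δ = j
      · subst hδ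
        simp only [dif_pos]
        exact ((Finset.mem_filter.1 hv).2).symm
      · simp [hδ]
    · intro w _
      funext i
      simp [i.2]
  rw [h, Finset.card_univ, Fintype.card_fun, Fintype.card_bool]
  congr 1
  have h2 : Fintype.card {i : Fin n // ¬ i = j} = n - 1 := by
    rw [Fintype.card_subtype_compl, Fintype.card_subtype_eq, Fintype.card_fin]
  exact h2

/-- The narrow direction of a box (chosen via choice). -/
noncomputable def narrowDir {d : ℕ} (hd : 1 ≤ d) (p : Fin d → ℕ)
    (D : (Fin d → ℤ) × (Fin d → ℤ)) : Fin d :=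
  if h : ∃ j : Fin d, D.2 j - D.1 j = 1 ∧ ∀ δ ≠ j, D.2 δ - D.1 δ = (p δ : ℤ)
  then h.choose else ⟨0, hd⟩

/-- The sign vector of a box. -/
def sgnVec {d : ℕ} (D : (Fin d → ℤ) × (Fin d → ℤ)) : Fin d → Bool :=
  fun δ => decide (1 ≤ D.1 δ)

/-- The signature of a box: boundary boxes go to their sign vector, interior boxes
to their narrow direction, slab position and (modified) sign vector. -/
noncomputable def boxSig {d : ℕ} (hd : 1 ≤ d) (p : Fin d → ℕ)
    (D : (Fin d → ℤ) × (Fin d → ℤ)) :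
    (Fin d → Bool) ⊕ ((_ : Fin d) × (ℤ × (Fin d → Bool))) :=
  if D.1 (narrowDir hd p D) = 0 ∨ D.1 (narrowDir hd p D) = (p (narrowDir hd p D) : ℤ) - 1
  then Sum.inl (sgnVec D)
  else Sum.inr ⟨narrowDir hd p D,
    (D.1 (narrowDir hd p D), Function.update (sgnVec D) (narrowDir hd p D) true)⟩

/-- Proposition `lemma:narrow-macro-elements`: let `P` be a family of pairwise disjoint
boxes with integer endpoints covering `[0,p₁) × … × [0,p_d)`, each intersecting it, and
each of size `p_δ` in every direction except one direction `j_D` (depending on the box)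
in which it has size `1`. Then `#P ≤ 2^d + 2^{d−1}·Σ_δ (p_δ − 2)₊` (here `(x)₊ = max{x,0}`
is realized by truncated subtraction on `ℕ`). -/
theorem card_narrow_cover_le {d : ℕ} (hd : 1 ≤ d) (p : Fin d → ℕ) (hp : ∀ δ, 0 < p δ)
    (P : Finset ((Fin d → ℤ) × (Fin d → ℤ)))
    (hdisj : (P : Set ((Fin d → ℤ) × (Fin d → ℤ))).Pairwise fun D E =>
      Disjoint (boxSet D.1 D.2) (boxSet E.1 E.2))
    (hmeet : ∀ D ∈ P,
      (boxSet D.1 D.2 ∩ boxSet (fun _ => 0) (fun δ => (p δ : ℤ))).Nonempty)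
    (hcover : boxSet (fun _ => 0) (fun δ => (p δ : ℤ)) ⊆
      ⋃ D ∈ P, boxSet D.1 D.2)
    (hnarrow : ∀ D ∈ P, ∃ j : Fin d,
      D.2 j - D.1 j = 1 ∧ ∀ δ ≠ j, D.2 δ - D.1 δ = (p δ : ℤ)) :
    P.card ≤ 2 ^ d + 2 ^ (d - 1) * ∑ δ, (p δ - 2) := by
  classical
  have hjj : ∀ D ∈ P, D.2 (narrowDir hd p D) - D.1 (narrowDir hd p D) = 1 ∧
      ∀ δ ≠ narrowDir hd p D, D.2 δ - D.1 δ = (p δ : ℤ) := by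
    intro D hD
    have h := hnarrow D hD
    rw [narrowDir, dif_pos h]
    exact h.choose_spec
  have key : ∀ D ∈ P, ∀ δ, D.1 δ < (p δ : ℤ) ∧ 0 < D.2 δ := by
    intro D hD δ
    obtain ⟨x, hx1, hx2⟩ := hmeet D hD
    simp only [boxSet, Set.mem_pi, Set.mem_univ, forall_true_left, Set.mem_Ico] at hx1 hx2
    have h1 := hx1 δ
    have h2 := hx2 δ
    constructor
    · exact_mod_cast lt_of_le_of_lt h1.1 h2.2
    · have h3 : ((0 : ℤ) : ℝ) < (D.2 δ : ℝ) := lt_of_le_of_lt (by exact_mod_cast h2.1) h1.2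
      exact_mod_cast h3
  have pos : ∀ D ∈ P, ∀ δ, D.1 δ < D.2 δ := by
    intro D hD δ
    obtain ⟨h1, h2⟩ := hjj D hD
    by_cases hδ : δ = narrowDir hd p D
    · rw [hδ]; omega
    · have h3 := h2 δ hδ
      have h4 := hp δ
      omega
  have overlap : ∀ D ∈ P, ∀ E ∈ P,
      (∀ δ, E.1 δ < D.2 δ ∧ D.1 δ < E.2 δ) → D = E := by
    intro D hD E hE h
    by_contra hne
    have hdis := hdisj (Finset.mem_coe.2 hD) (Finset.mem_coe.2 hE) hne
    have hx : ((fun δ => ((max (D.1 δ) (E.1 δ) : ℤ) : ℝ)) ∈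
        boxSet D.1 D.2 ∩ boxSet E.1 E.2) := by
      constructor <;>
        simp only [boxSet, Set.mem_pi, Set.mem_univ, forall_true_left, Set.mem_Ico] <;>
        intro δ
      · constructor
        · exact_mod_cast le_max_left _ _
        · exact_mod_cast max_lt (pos D hD δ) (h δ).1
      · constructor
        · exact_mod_cast le_max_right _ _
        · exact_mod_cast max_lt (h δ).2 (pos E hE δ)
    exact Set.disjoint_left.mp hdis hx.1 hx.2
  let F : Finset ((Fin d → Bool) ⊕ ((_ : Fin d) × (ℤ × (Fin d → Bool)))) :=
    Finset.disjSum Finset.univ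
      (Finset.univ.sigma fun j =>
        Finset.Ico (1 : ℤ) ((p j : ℤ) - 1) ×ˢ
          (Finset.univ.filter fun v : Fin d → Bool => v j = true))
  have hmaps : ∀ D ∈ P, boxSig hd p D ∈ F := by
    intro D hD
    by_cases hb : D.1 (narrowDir hd p D) = 0 ∨
        D.1 (narrowDir hd p D) = (p (narrowDir hd p D) : ℤ) - 1
    · rw [boxSig, if_pos hb]
      exact Finset.inl_mem_disjSum.2 (Finset.mem_univ _)
    · rw [boxSig, if_neg hb]
      refine Finset.inr_mem_disjSum.2 (Finset.mem_sigma.2 ⟨Finset.mem_univ _, ?_⟩)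
      refine Finset.mem_product.2 ⟨?_, ?_⟩
      · have h1 := (key D hD (narrowDir hd p D)).1
        have h2 := (key D hD (narrowDir hd p D)).2
        have h3 := (hjj D hD).1
        simp only [Finset.mem_Ico]
        push_neg at hb
        omega
      · simp [Function.update_self]
  have hinj : Set.InjOn (boxSig hd p) P := by
    intro D hD E hE hΦ
    refine overlap D hD E hE ?_
    by_cases hbD : D.1 (narrowDir hd p D) = 0 ∨
        D.1 (narrowDir hd p D) = (p (narrowDir hd p D) : ℤ) - 1 <;>
      by_cases hbE : E.1 (narrowDir hd p E) = 0 ∨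
        E.1 (narrowDir hd p E) = (p (narrowDir hd p E) : ℤ) - 1
    · -- both boundary
      rw [boxSig, boxSig, if_pos hbD, if_pos hbE] at hΦ
      have hsgnv : sgnVec D = sgnVec E := Sum.inl.inj hΦ
      intro δ
      have hsgn : (1 ≤ D.1 δ ↔ 1 ≤ E.1 δ) := by
        have h := congrFun hsgnv δ
        simpa [sgnVec, decide_eq_decide] using h
      have hDf : (D.2 δ - D.1 δ = 1 ∧ (D.1 δ = 0 ∨ D.1 δ = (p δ : ℤ) - 1)) ∨
          D.2 δ - D.1 δ = (p δ : ℤ) := by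
        by_cases hδ : δ = narrowDir hd p D
        · rw [hδ]; exact Or.inl ⟨(hjj D hD).1, hbD⟩
        · exact Or.inr ((hjj D hD).2 δ hδ)
      have hEf : (E.2 δ - E.1 δ = 1 ∧ (E.1 δ = 0 ∨ E.1 δ = (p δ : ℤ) - 1)) ∨
          E.2 δ - E.1 δ = (p δ : ℤ) := by
        by_cases hδ : δ = narrowDir hd p E
        · rw [hδ]; exact Or.inl ⟨(hjj E hE).1, hbE⟩
        · exact Or.inr ((hjj E hE).2 δ hδ)
      have k1 := key D hD δ
      have k2 := key E hE δ
      have hpδ := hp δ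
      omega
    · rw [boxSig, boxSig, if_pos hbD, if_neg hbE] at hΦ
      exact absurd hΦ (by simp)
    · rw [boxSig, boxSig, if_neg hbD, if_pos hbE] at hΦ
      exact absurd hΦ (by simp)
    · -- both interior
      rw [boxSig, boxSig, if_neg hbD, if_neg hbE] at hΦ
      have hΦ' := Sum.inr.inj hΦ
      have hj : narrowDir hd p D = narrowDir hd p E := congrArg Sigma.fst hΦ'
      have hpair : (D.1 (narrowDir hd p D),
            Function.update (sgnVec D) (narrowDir hd p D) true)
          = (E.1 (narrowDir hd p E),
            Function.update (sgnVec E) (narrowDir hd p E) true) := by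
        obtain ⟨-, h2⟩ := Sigma.mk.inj_iff.1 hΦ'
        exact eq_of_heq h2
      have ha : D.1 (narrowDir hd p D) = E.1 (narrowDir hd p E) := congrArg Prod.fst hpair
      have hv : Function.update (sgnVec D) (narrowDir hd p D) true
          = Function.update (sgnVec E) (narrowDir hd p E) true := congrArg Prod.snd hpair
      intro δ
      by_cases hδ : δ = narrowDir hd p D
      · have l1 := (hjj D hD).1
        have l2 := (hjj E hE).1
        rw [← hj] at l2 ha
        rw [hδ]
        omega
      · have l1 := (hjj D hD).2 δ hδ
        have hδ' : δ ≠ narrowDir hd p E := by rw [← hj]; exact hδ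
        have l2 := (hjj E hE).2 δ hδ'
        have hsgn : (1 ≤ D.1 δ ↔ 1 ≤ E.1 δ) := by
          have h := congrFun hv δ
          rw [Function.update_of_ne hδ, Function.update_of_ne hδ'] at h
          simpa [sgnVec, decide_eq_decide] using h
        have k1 := key D hD δ
        have k2 := key E hE δ
        have hpδ := hp δ
        omega
  have hcard : P.card ≤ F.card := Finset.card_le_card_of_injOn (boxSig hd p) hmaps hinj
  have hF : F.card = 2 ^ d + 2 ^ (d - 1) * ∑ δ, (p δ - 2) := by
    show (Finset.disjSum _ _).card = _
    rw [Finset.card_disjSum, Finset.card_sigma]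
    congr 1
    · rw [Finset.card_univ, Fintype.card_fun, Fintype.card_bool, Fintype.card_fin]
    · rw [Finset.mul_sum]
      apply Finset.sum_congr rfl
      intro j _
      rw [Finset.card_product, filter_apply_card, Int.card_Ico]
      have h1 := hp j
      have h2 : ((p j : ℤ) - 1 - 1).toNat = p j - 2 := by omega
      rw [h2, mul_comm]
  omega
end

section
/- Let d ≥ 1 and let p_1,…,p_d be integers with p_δ ≥ 2 for all δ. Then there exists a family P of pairwise disjoint boxes D = [a_1,b_1) × … × [a_d,b_d) with integer endpoints, each intersecting [0,p_1) × … × [0,p_d), whose union covers [0,p_1) × … × [0,p_d), such that each D ∈ P has b_δ − a_δ = p_δ for all δ ≠ j_D and b_{j_D} − a_{j_D} = 1 for some index j_D depending on D, and such that #P = 2^d + 2^{d−1}·Σ_{δ=1}^d (p_δ − 2). (Sharpness of Proposition 'lemma:narrow-macro-elements', as stated in the paper's subsequent Remark.) -/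
open Set

lemma mem_boxSet {d : ℕ} {a b : Fin d → ℤ} {x : Fin d → ℝ} :
    x ∈ boxSet a b ↔ ∀ δ, (a δ : ℝ) ≤ x δ ∧ x δ < b δ := by
  simp [boxSet, Set.mem_pi, Set.mem_Ico]

lemma boxSet_disjoint_of_coord {d : ℕ} {a b a' b' : Fin d → ℤ} (δ : Fin d)
    (h : b δ ≤ a' δ ∨ b' δ ≤ a δ) :
    Disjoint (boxSet a b) (boxSet a' b') := by
  rw [Set.disjoint_left]
  intro x hx hx'
  obtain ⟨h1, h2⟩ := mem_boxSet.1 hx δ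
  obtain ⟨h3, h4⟩ := mem_boxSet.1 hx' δ
  rcases h with h | h
  · have : (b δ : ℝ) ≤ a' δ := by exact_mod_cast h
    linarith
  · have : (b' δ : ℝ) ≤ a δ := by exact_mod_cast h
    linarith

lemma mem_boxSet_cons {d : ℕ} {c e : ℤ} {a b : Fin d → ℤ} {x : Fin (d+1) → ℝ} :
    x ∈ boxSet (Fin.cons c a) (Fin.cons e b) ↔
      ((c : ℝ) ≤ x 0 ∧ x 0 < (e : ℝ)) ∧ (fun δ => x δ.succ) ∈ boxSet a b := by
  simp only [mem_boxSet]
  constructor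
  · intro h
    refine ⟨by simpa using h 0, fun δ => by simpa using h δ.succ⟩
  · rintro ⟨h0, h⟩ δ
    refine Fin.cases ?_ ?_ δ
    · simpa using h0
    · intro i; simpa using h i

lemma disjoint_boxSet_cons {d : ℕ} {c e c' e' : ℤ} {a b a' b' : Fin d → ℤ}
    (h : Disjoint (boxSet a b) (boxSet a' b')) :
    Disjoint (boxSet (Fin.cons c a) (Fin.cons e b))
      (boxSet (Fin.cons c' a') (Fin.cons e' b')) := by
  rw [Set.disjoint_left] at h ⊢
  intro x hx hx'
  exact h (mem_boxSet_cons.1 hx).2 (mem_boxSet_cons.1 hx').2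

private def extBox {d : ℕ} (c e : ℤ) (D : (Fin d → ℤ) × (Fin d → ℤ)) :
    (Fin (d+1) → ℤ) × (Fin (d+1) → ℤ) := (Fin.cons c D.1, Fin.cons e D.2)

private def midBox {d : ℕ} (p : Fin (d+2) → ℕ) (kε : ℕ × (Fin (d+1) → Bool)) :
    (Fin (d+2) → ℤ) × (Fin (d+2) → ℤ) :=
  (Fin.cons ((kε.1:ℤ)+1) (fun δ => if kε.2 δ then 1 else 1 - (p δ.succ : ℤ)),
   Fin.cons ((kε.1:ℤ)+2) (fun δ => if kε.2 δ then 1 + (p δ.succ : ℤ) else 1))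

theorem aux : ∀ d : ℕ, ∀ p : Fin (d+1) → ℕ, (∀ δ, 2 ≤ p δ) →
    ∃ P : Finset ((Fin (d+1) → ℤ) × (Fin (d+1) → ℤ)),
      ((P : Set ((Fin (d+1) → ℤ) × (Fin (d+1) → ℤ))).Pairwise fun D E =>
        Disjoint (boxSet D.1 D.2) (boxSet E.1 E.2)) ∧
      (∀ D ∈ P,
        (boxSet D.1 D.2 ∩ boxSet (fun _ => 0) (fun δ => (p δ : ℤ))).Nonempty) ∧
      (boxSet (fun _ => 0) (fun δ => (p δ : ℤ)) ⊆ ⋃ D ∈ P, boxSet D.1 D.2) ∧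
      (∀ D ∈ P, ∃ j : Fin (d+1),
        D.2 j - D.1 j = 1 ∧ ∀ δ ≠ j, D.2 δ - D.1 δ = (p δ : ℤ)) ∧
      P.card = 2 ^ (d+1) + 2 ^ d * ∑ δ, (p δ - 2) := by
  intro d
  induction d with
  | zero =>
    intro p hp
    refine ⟨(Finset.range (p 0)).image
      (fun k : ℕ => ((fun _ => (k:ℤ)), (fun _ => (k:ℤ)+1))), ?_, ?_, ?_, ?_, ?_⟩
    · intro D hD E hE hne
      simp only [Finset.coe_image, Set.mem_image, Finset.mem_coe, Finset.mem_range] at hD hE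
      obtain ⟨k, hk, rfl⟩ := hD
      obtain ⟨l, hl, rfl⟩ := hE
      have hkl : k ≠ l := by rintro rfl; exact hne rfl
      refine boxSet_disjoint_of_coord 0 ?_
      simp only
      omega
    · intro D hD
      simp only [Finset.mem_image, Finset.mem_range] at hD
      obtain ⟨k, hk, rfl⟩ := hD
      refine ⟨fun _ => (k:ℝ), ?_, ?_⟩ <;> rw [mem_boxSet] <;> intro δ <;>
        have hδ : δ = 0 := Fin.eq_zero δ <;> subst hδ <;> push_cast <;>
        constructor <;>
        linarith [Nat.cast_nonneg (α := ℝ) k, show ((k:ℝ)) < (p 0:ℝ) from by exact_mod_cast hk]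
    · intro x hx
      rw [mem_boxSet] at hx
      obtain ⟨h0, h1⟩ := hx 0
      simp only [Int.cast_zero] at h0
      have hfl0 : 0 ≤ ⌊x 0⌋ := Int.floor_nonneg.2 h0
      have hflt : ⌊x 0⌋ < (p 0 : ℤ) := Int.floor_lt.2 (by exact_mod_cast h1)
      simp only [Set.mem_iUnion, Finset.mem_image, Finset.mem_range]
      refine ⟨((fun _ => (⌊x 0⌋.toNat : ℤ)), (fun _ => (⌊x 0⌋.toNat:ℤ)+1)), ⟨⟨⌊x 0⌋.toNat, by omega, rfl⟩, ?_⟩⟩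
      rw [mem_boxSet]
      intro δ
      have hδ : δ = 0 := Fin.eq_zero δ
      subst hδ
      have h2 : ((⌊x 0⌋.toNat : ℤ) : ℝ) = (⌊x 0⌋ : ℝ) := by
        exact_mod_cast congrArg (fun z : ℤ => (z : ℝ)) (Int.toNat_of_nonneg hfl0)
      constructor
      · rw [h2]; exact Int.floor_le _
      · push_cast at h2 ⊢
        rw [h2]
        exact Int.lt_floor_add_one _
    · intro D hD
      simp only [Finset.mem_image, Finset.mem_range] at hD
      obtain ⟨k, hk, rfl⟩ := hD
      refine ⟨0, by ring, fun δ hδ => absurd (Fin.eq_zero δ) hδ⟩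
    · rw [Finset.card_image_of_injective _ ?_, Finset.card_range]
      · have := hp 0
        simp [Fin.sum_univ_one]
        omega
      · intro k l h
        have : (k:ℤ) = l := congrFun (congrArg Prod.fst h) 0
        exact_mod_cast this
  | succ d ih =>
    intro p hp
    classical
    obtain ⟨P', hdisj', hint', hcov', hnar', hcard'⟩ :=
      ih (fun δ => p δ.succ) (fun δ => hp δ.succ)
    have hq2 : (2:ℤ) ≤ (p 0 : ℤ) := by exact_mod_cast hp 0
    set bot : ((Fin (d+1) → ℤ) × (Fin (d+1) → ℤ)) → ((Fin (d+2) → ℤ) × (Fin (d+2) → ℤ)) :=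
      extBox (1 - (p 0 : ℤ)) 1 with hbot
    set top : ((Fin (d+1) → ℤ) × (Fin (d+1) → ℤ)) → ((Fin (d+2) → ℤ) × (Fin (d+2) → ℤ)) :=
      extBox ((p 0 : ℤ) - 1) (2*(p 0 : ℤ) - 1) with htop
    set P : Finset ((Fin (d+2) → ℤ) × (Fin (d+2) → ℤ)) :=
      P'.image bot ∪ P'.image top ∪
        ((Finset.range (p 0 - 2)) ×ˢ (Finset.univ : Finset (Fin (d+1) → Bool))).image (midBox p)
      with hP
    have hmem : ∀ D, D ∈ P ↔
        (∃ E ∈ P', bot E = D) ∨ (∃ E ∈ P', top E = D) ∨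
        (∃ k, ∃ ε : Fin (d+1) → Bool, k < p 0 - 2 ∧ midBox p (k, ε) = D) := by
      intro D
      simp only [hP, Finset.mem_union, Finset.mem_image, or_assoc]
      refine or_congr Iff.rfl (or_congr Iff.rfl ?_)
      constructor
      · rintro ⟨⟨k, ε⟩, hk, h⟩
        rw [Finset.mem_product, Finset.mem_range] at hk
        exact ⟨k, ε, hk.1, h⟩
      · rintro ⟨k, ε, hk, h⟩
        exact ⟨(k, ε), by simp [Finset.mem_product, Finset.mem_range, hk], h⟩
    refine ⟨P, ?_, ?_, ?_, ?_, ?_⟩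
    · -- pairwise disjoint
      have hbt : ∀ (E₁ E₂ : (Fin (d+1) → ℤ) × (Fin (d+1) → ℤ)), Disjoint (boxSet (bot E₁).1 (bot E₁).2)
          (boxSet (top E₂).1 (top E₂).2) := by
        intro E₁ E₂
        refine boxSet_disjoint_of_coord 0 (Or.inl ?_)
        simp only [hbot, htop, extBox, Fin.cons_zero]
        omega
      have hbm : ∀ (E₁ : (Fin (d+1) → ℤ) × (Fin (d+1) → ℤ)) (k : ℕ) (ε : Fin (d+1) → Bool),
          Disjoint (boxSet (bot E₁).1 (bot E₁).2)
            (boxSet (midBox p (k, ε)).1 (midBox p (k, ε)).2) := by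
        intro E₁ k ε
        refine boxSet_disjoint_of_coord 0 (Or.inl ?_)
        simp only [hbot, extBox, midBox, Fin.cons_zero]
        omega
      have htm : ∀ (E₁ : (Fin (d+1) → ℤ) × (Fin (d+1) → ℤ)) (k : ℕ) (ε : Fin (d+1) → Bool), k < p 0 - 2 →
          Disjoint (boxSet (top E₁).1 (top E₁).2)
            (boxSet (midBox p (k, ε)).1 (midBox p (k, ε)).2) := by
        intro E₁ k ε hk
        refine boxSet_disjoint_of_coord 0 (Or.inr ?_)
        simp only [htop, extBox, midBox, Fin.cons_zero]
        omega
      intro D hD E hE hne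
      rw [Finset.mem_coe, hmem] at hD hE
      rcases hD with ⟨E₁, hE₁, rfl⟩ | ⟨E₁, hE₁, rfl⟩ | ⟨k, ε, hk, rfl⟩ <;>
        rcases hE with ⟨E₂, hE₂, rfl⟩ | ⟨E₂, hE₂, rfl⟩ | ⟨l, ε', hl, rfl⟩
      · -- bot bot
        have hne' : E₁ ≠ E₂ := fun h => hne (by rw [h])
        simp only [hbot, extBox]
        exact disjoint_boxSet_cons
          (hdisj' (Finset.mem_coe.2 hE₁) (Finset.mem_coe.2 hE₂) hne')
      · exact hbt E₁ E₂
      · exact hbm E₁ l ε'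
      · exact (hbt E₂ E₁).symm
      · -- top top
        have hne' : E₁ ≠ E₂ := fun h => hne (by rw [h])
        simp only [htop, extBox]
        exact disjoint_boxSet_cons
          (hdisj' (Finset.mem_coe.2 hE₁) (Finset.mem_coe.2 hE₂) hne')
      · exact htm E₁ l ε' hl
      · exact (hbm E₂ k ε).symm
      · exact (htm E₂ k ε hk).symm
      · -- mid mid
        rcases eq_or_ne k l with rfl | hkl
        · have hεε : ε ≠ ε' := by
            intro h; exact hne (by rw [h])
          obtain ⟨δ, hδ⟩ := Function.ne_iff.1 hεε
          refine boxSet_disjoint_of_coord δ.succ ?_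
          simp only [midBox, Fin.cons_succ]
          have hp2 : (2:ℤ) ≤ (p δ.succ : ℤ) := by exact_mod_cast hp δ.succ
          rcases Bool.eq_false_or_eq_true (ε δ) with h1 | h1 <;>
            rcases Bool.eq_false_or_eq_true (ε' δ) with h2 | h2 <;>
            simp [h1, h2] at hδ ⊢ <;> omega
        · refine boxSet_disjoint_of_coord 0 ?_
          simp only [midBox, Fin.cons_zero]
          omega
    · -- intersect
      intro D hD
      rw [hmem] at hD
      have hbig : ∀ (c : ℝ), 0 ≤ c → c < (p 0 : ℝ) →
          ∀ y : Fin (d+1) → ℝ, y ∈ boxSet (fun _ => 0) (fun δ => (p δ.succ : ℤ)) →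
          Fin.cons c y ∈ boxSet (fun _ => (0:ℤ)) (fun δ : Fin (d+2) => (p δ : ℤ)) := by
        intro c hc1 hc2 y hy
        rw [mem_boxSet]
        intro δ
        refine Fin.cases ?_ (fun i => ?_) δ
        · simpa using ⟨hc1, hc2⟩
        · simpa using (mem_boxSet.1 hy) i
      rcases hD with ⟨E, hE, rfl⟩ | ⟨E, hE, rfl⟩ | ⟨k, ε, hk, rfl⟩
      · obtain ⟨y, hy1, hy2⟩ := hint' E hE
        have hp0R : (2:ℝ) ≤ (p 0 : ℝ) := by exact_mod_cast hp 0
        refine ⟨Fin.cons 0 y, ?_, hbig 0 le_rfl (by linarith) y hy2⟩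
        simp only [hbot, extBox]
        refine mem_boxSet_cons.2 ⟨⟨?_, ?_⟩, by simpa [Fin.cons_succ] using hy1⟩
        · simp only [Fin.cons_zero]
          push_cast
          linarith
        · simp only [Fin.cons_zero]
          push_cast
          norm_num
      · obtain ⟨y, hy1, hy2⟩ := hint' E hE
        have hp0R : (2:ℝ) ≤ (p 0 : ℝ) := by exact_mod_cast hp 0
        refine ⟨Fin.cons ((p 0 : ℝ) - 1) y, ?_,
          hbig _ (by linarith) (by linarith) y hy2⟩
        simp only [htop, extBox]
        refine mem_boxSet_cons.2 ⟨⟨?_, ?_⟩, by simpa [Fin.cons_succ] using hy1⟩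
        · simp only [Fin.cons_zero]; push_cast; linarith
        · simp only [Fin.cons_zero]; push_cast; linarith
      · have hp0R : (2:ℝ) ≤ (p 0 : ℝ) := by exact_mod_cast hp 0
        have hkR : (k:ℝ) + 2 ≤ (p 0 : ℝ) := by exact_mod_cast by omega
        refine ⟨Fin.cons ((k:ℝ) + 1) (fun δ => if ε δ then (1:ℝ) else 0), ?_, ?_⟩
        · simp only [midBox]
          refine mem_boxSet_cons.2 ⟨⟨?_, ?_⟩, ?_⟩
          · simp only [Fin.cons_zero]; push_cast; linarith
          · simp only [Fin.cons_zero]; push_cast; linarith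
          · rw [mem_boxSet]
            intro δ
            have hpδ : (2:ℝ) ≤ (p δ.succ : ℝ) := by exact_mod_cast hp δ.succ
            simp only [Fin.cons_succ]
            rcases Bool.eq_false_or_eq_true (ε δ) with h1 | h1 <;>
              simp only [h1, if_true, if_false, Bool.false_eq_true] <;> push_cast <;>
              first
                | (constructor <;> linarith)
                | linarith
                | trivial
        · refine hbig _ (by positivity) (by linarith) _ ?_
          rw [mem_boxSet]
          intro δ
          have hpδ : (2:ℝ) ≤ (p δ.succ : ℝ) := by exact_mod_cast hp δ.succ
          rcases Bool.eq_false_or_eq_true (ε δ) with h1 | h1 <;>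
            simp only [h1, if_true, if_false, Bool.false_eq_true, Int.cast_zero,
              Int.cast_natCast] <;> push_cast <;>
            first
              | (constructor <;> linarith)
              | linarith
              | trivial
    · -- cover
      intro x hx
      have hx' := mem_boxSet.1 hx
      obtain ⟨hx0a, hx0b⟩ := hx' 0
      rw [Int.cast_zero] at hx0a
      by_cases hlow : x 0 < 1
      · have htail : (fun δ => x δ.succ) ∈
            boxSet (fun _ => (0:ℤ)) (fun δ => (p δ.succ : ℤ)) := by
          rw [mem_boxSet]; intro i; simpa using hx' i.succ
        obtain ⟨D, hD, hxD⟩ := Set.mem_iUnion₂.1 (hcov' htail)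
        refine Set.mem_iUnion₂.2 ⟨bot D, (hmem _).2 (Or.inl ⟨D, hD, rfl⟩), ?_⟩
        simp only [hbot, extBox]
        refine mem_boxSet_cons.2 ⟨⟨?_, by simpa using hlow⟩, hxD⟩
        push_cast
        linarith [show (2:ℝ) ≤ (p 0 : ℝ) from by exact_mod_cast hp 0]
      · by_cases hhigh : (p 0 : ℝ) - 1 ≤ x 0
        · have htail : (fun δ => x δ.succ) ∈
              boxSet (fun _ => (0:ℤ)) (fun δ => (p δ.succ : ℤ)) := by
            rw [mem_boxSet]; intro i; simpa using hx' i.succ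
          obtain ⟨D, hD, hxD⟩ := Set.mem_iUnion₂.1 (hcov' htail)
          refine Set.mem_iUnion₂.2 ⟨top D, (hmem _).2 (Or.inr (Or.inl ⟨D, hD, rfl⟩)), ?_⟩
          simp only [htop, extBox]
          have hx0b' : x 0 < (p 0 : ℝ) := by exact_mod_cast hx0b
          have hp0R : (2:ℝ) ≤ (p 0 : ℝ) := by exact_mod_cast hp 0
          refine mem_boxSet_cons.2 ⟨⟨by push_cast; linarith, by push_cast; linarith⟩, hxD⟩
        · have h1 : (1:ℝ) ≤ x 0 := not_lt.1 hlow
          have h2 : x 0 < (p 0 : ℝ) - 1 := not_le.1 hhigh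
          have hfl1 : 1 ≤ ⌊x 0⌋ := Int.le_floor.2 (by exact_mod_cast h1)
          have hfl2 : ⌊x 0⌋ < (p 0 : ℤ) - 1 := Int.floor_lt.2 (by push_cast; linarith)
          set k : ℕ := (⌊x 0⌋ - 1).toNat with hkdef
          have hkk : (k:ℤ) = ⌊x 0⌋ - 1 := Int.toNat_of_nonneg (by omega)
          have hklt : k < p 0 - 2 := by omega
          set ε : Fin (d+1) → Bool := fun δ => decide ((1:ℝ) ≤ x δ.succ) with hε
          refine Set.mem_iUnion₂.2
            ⟨midBox p (k, ε), (hmem _).2 (Or.inr (Or.inr ⟨k, ε, hklt, rfl⟩)), ?_⟩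
          have hkR : (k:ℝ) = (⌊x 0⌋ : ℝ) - 1 := by exact_mod_cast hkk
          simp only [midBox]
          refine mem_boxSet_cons.2 ⟨⟨?_, ?_⟩, ?_⟩
          · push_cast
            rw [hkR]
            linarith [Int.floor_le (x 0)]
          · push_cast
            rw [hkR]
            linarith [Int.lt_floor_add_one (x 0)]
          · rw [mem_boxSet]
            intro δ
            obtain ⟨ha, hb⟩ := hx' δ.succ
            rw [Int.cast_zero] at ha
            have hpδ : (2:ℝ) ≤ (p δ.succ : ℝ) := by exact_mod_cast hp δ.succ
            push_cast at hb
            by_cases hx1 : (1:ℝ) ≤ x δ.succ <;>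
              simp only [hε, decide_eq_true_eq, hx1, if_true, if_false] <;>
              push_cast <;>
              first
                | (constructor <;> linarith)
                | linarith
                | trivial
    · -- narrow
      intro D hD
      rw [hmem] at hD
      rcases hD with ⟨E, hE, rfl⟩ | ⟨E, hE, rfl⟩ | ⟨k, ε, hk, rfl⟩
      · obtain ⟨j, hj1, hj2⟩ := hnar' E hE
        refine ⟨j.succ, by simpa [hbot, extBox] using hj1,
          fun δ => Fin.cases ?_ (fun i hi => ?_) δ⟩
        · intro _
          simp only [hbot, extBox, Fin.cons_zero]
          omega
        · have : i ≠ j := fun h => hi (by rw [h])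
          simpa [hbot, extBox] using hj2 i this
      · obtain ⟨j, hj1, hj2⟩ := hnar' E hE
        refine ⟨j.succ, by simpa [htop, extBox] using hj1,
          fun δ => Fin.cases ?_ (fun i hi => ?_) δ⟩
        · intro _
          simp only [htop, extBox, Fin.cons_zero]
          omega
        · have : i ≠ j := fun h => hi (by rw [h])
          simpa [htop, extBox] using hj2 i this
      · refine ⟨0, by simp [midBox], fun δ hδ => ?_⟩
        obtain ⟨i, rfl⟩ := Fin.eq_succ_of_ne_zero hδ
        simp only [midBox, Fin.cons_succ]
        rcases Bool.eq_false_or_eq_true (ε i) with h1 | h1 <;>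
          simp only [h1, if_true, if_false, Bool.false_eq_true] <;> ring
    · -- cardinality
      have hconsinj : ∀ (c : ℤ) (a₁ a₂ : Fin (d+1) → ℤ),
          (Fin.cons c a₁ : Fin (d+2) → ℤ) = Fin.cons c a₂ → a₁ = a₂ := by
        intro c a₁ a₂ h
        have := congrArg Fin.tail h
        rwa [Fin.tail_cons, Fin.tail_cons] at this
      have hextinj : ∀ (c e : ℤ), Function.Injective
          (extBox (d := d+1) c e) := by
        intro c e E₁ E₂ h
        have h1 := congrArg Prod.fst h
        have h2 := congrArg Prod.snd h
        simp only [extBox] at h1 h2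
        exact Prod.ext (hconsinj _ _ _ h1) (hconsinj _ _ _ h2)
      have hmidinj : Set.InjOn (midBox p)
          ↑((Finset.range (p 0 - 2)) ×ˢ (Finset.univ : Finset (Fin (d+1) → Bool))) := by
        rintro ⟨k, ε⟩ _ ⟨l, ε'⟩ _ h
        have h1 := congrArg Prod.fst h
        simp only [midBox] at h1
        have hk0 := congrFun h1 0
        simp only [Fin.cons_zero] at hk0
        have hkl : k = l := by omega
        subst hkl
        have hεε : ε = ε' := by
          funext δ
          have hδ := congrFun h1 δ.succ
          simp only [Fin.cons_succ] at hδ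
          have hp2 : (2:ℤ) ≤ (p δ.succ : ℤ) := by exact_mod_cast hp δ.succ
          rcases Bool.eq_false_or_eq_true (ε δ) with ha | ha <;>
            rcases Bool.eq_false_or_eq_true (ε' δ) with hb | hb <;>
            simp [ha, hb] at hδ ⊢ <;> omega
        rw [hεε]
      have hd1 : Disjoint (P'.image bot) (P'.image top) := by
        rw [Finset.disjoint_left]
        rintro D hD hD'
        simp only [Finset.mem_image] at hD hD'
        obtain ⟨E₁, _, rfl⟩ := hD
        obtain ⟨E₂, _, h⟩ := hD'
        have := congrFun (congrArg Prod.fst h) 0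
        simp only [hbot, htop, extBox, Fin.cons_zero] at this
        omega
      have hd2 : Disjoint (P'.image bot ∪ P'.image top)
          (((Finset.range (p 0 - 2)) ×ˢ
            (Finset.univ : Finset (Fin (d+1) → Bool))).image (midBox p)) := by
        rw [Finset.disjoint_left]
        rintro D hD hD'
        simp only [Finset.mem_union, Finset.mem_image] at hD hD'
        obtain ⟨kε, hk, h⟩ := hD'
        rw [Finset.mem_product, Finset.mem_range] at hk
        have hk1 := hk.1
        rcases hD with ⟨E, _, rfl⟩ | ⟨E, _, rfl⟩
        · have := congrFun (congrArg Prod.fst h) 0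
          simp only [hbot, extBox, midBox, Fin.cons_zero] at this
          omega
        · have := congrFun (congrArg Prod.fst h) 0
          simp only [htop, extBox, midBox, Fin.cons_zero] at this
          omega
      rw [hP, Finset.card_union_of_disjoint hd2, Finset.card_union_of_disjoint hd1,
        Finset.card_image_of_injective _ (hextinj _ _),
        Finset.card_image_of_injective _ (hextinj _ _),
        Finset.card_image_of_injOn hmidinj, Finset.card_product, Finset.card_range,
        Finset.card_univ, hcard']
      have hcardfun : Fintype.card (Fin (d+1) → Bool) = 2^(d+1) := by
        simp [Fintype.card_fun]
      rw [hcardfun]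
      rw [show (∑ δ : Fin (d+1+1), (p δ - 2)) = (p 0 - 2) + ∑ i : Fin (d+1), (p i.succ - 2)
        from Fin.sum_univ_succ _]
      simp only [pow_succ]
      ring

/-- Sharpness of Proposition `lemma:narrow-macro-elements` (the Remark following it):
for `d ≥ 1` and `p_δ ≥ 2`, there is a family `P` of pairwise disjoint boxes with integer
endpoints, each intersecting `[0,p₁) × … × [0,p_d)`, covering it, each of size `p_δ` in
every direction except one direction `j_D` (depending on the box) in which it has size
`1`, such that `#P = 2^d + 2^{d−1}·Σ_δ (p_δ − 2)`. -/
theorem exists_narrow_cover_sharp {d : ℕ} (hd : 1 ≤ d) (p : Fin d → ℕ)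
    (hp : ∀ δ, 2 ≤ p δ) :
    ∃ P : Finset ((Fin d → ℤ) × (Fin d → ℤ)),
      ((P : Set ((Fin d → ℤ) × (Fin d → ℤ))).Pairwise fun D E =>
        Disjoint (boxSet D.1 D.2) (boxSet E.1 E.2)) ∧
      (∀ D ∈ P,
        (boxSet D.1 D.2 ∩ boxSet (fun _ => 0) (fun δ => (p δ : ℤ))).Nonempty) ∧
      (boxSet (fun _ => 0) (fun δ => (p δ : ℤ)) ⊆ ⋃ D ∈ P, boxSet D.1 D.2) ∧
      (∀ D ∈ P, ∃ j : Fin d,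
        D.2 j - D.1 j = 1 ∧ ∀ δ ≠ j, D.2 δ - D.1 δ = (p δ : ℤ)) ∧
      P.card = 2 ^ d + 2 ^ (d - 1) * ∑ δ, (p δ - 2) := by
  obtain ⟨d', rfl⟩ : ∃ d', d = d' + 1 := ⟨d - 1, by omega⟩
  exact aux d' p hp
end
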